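/- arXiv:2404.00778 — 3 statements merged into one kernel-verified Lean document; each statement's English description precedes it below -/
import Mathlib

section
/- Let α ∈ KW. Then: (1) α' ∈ KW; (2) ⟨1_{C2}, (i,α)⟩ = 1, where i ∈ I is determined by M^i = a_{α⊗1}; (3) if β ∈ KW and a_{α⊗1} ≅ a_{β⊗1}, then α = β. -/
open scoped BigOperators Classical

/-- The combinatorial data of the categorical coset setting: pseudo-unitary modular
tensor categories `C1`, `C2`, a regular commutative algebra `A` in the Deligne product
`C1 ⊗ C2`, the modular tensor category `C = (C1 ⊗ C2)_A^0` of local `A`-modules and the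
fusion category `(C1 ⊗ C2)_A` of all `A`-modules, encoded through their (finitely many)
simple objects, fusion multiplicities, categorical ( = Frobenius–Perron) dimensions,
restriction multiplicities, normalized S-matrices, twists and double-braiding data.
`I`, `J`, `K`, `V` index the simple objects of `C`, `C1`, `C2`, `(C1 ⊗ C2)_A`
respectively; `M^1 = A`, `W^1 = 1_{C1}`, `N^1 = 1_{C2}`; `res v α φ` is the multiplicity
of `W^α ⊗ N^φ` in the restriction of the simple `A`-module `v` to `C1 ⊗ C2`; `ι` embeds
the simple local `A`-modules `M^i` into the simple `A`-modules.  The assumptions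
`M^{(1,1)} = 1_{C2}` and `dim Hom_{C2}(1_{C2}, M^{(1,α)}) = δ_{1,α}` are the fields
`res_one` and `res_unit`. -/
structure CosetSetting where
  I : Type
  J : Type
  K : Type
  V : Type
  [fintI : Fintype I]
  [fintJ : Fintype J]
  [fintK : Fintype K]
  [fintV : Fintype V]
  [deqI : DecidableEq I]
  [deqJ : DecidableEq J]
  [deqK : DecidableEq K]
  [deqV : DecidableEq V]
  oneI : I
  oneJ : J
  oneK : K
  N1 : J → J → J → ℕ
  N2 : K → K → K → ℕ
  NC : I → I → I → ℕ
  NV : V → V → V → ℕ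
  dual1 : J → J
  dual2 : K → K
  dualI : I → I
  dJ : J → ℝ
  dK : K → ℝ
  dI : I → ℝ
  res : V → J → K → ℕ
  ι : I → V
  s1 : J → J → ℂ
  s2 : K → K → ℂ
  sC : I → I → ℂ
  θ1 : J → ℂ
  θ2 : K → ℂ
  θC : I → ℂ
  centralizes : J → J → Prop
  ι_inj : Function.Injective ι
  dJ_pos : ∀ α, 0 < dJ α
  dK_pos : ∀ φ, 0 < dK φ
  dI_pos : ∀ i, 0 < dI i
  dJ_one : dJ oneJ = 1
  dK_one : dK oneK = 1
  dI_one : dI oneI = 1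
  N1_comm : ∀ α β γ, N1 α β γ = N1 β α γ
  N1_one : ∀ α β, N1 oneJ α β = if α = β then 1 else 0
  N1_dual : ∀ α β, N1 α β oneJ = if β = dual1 α then 1 else 0
  N1_assoc : ∀ α β γ δ, (∑ ε, N1 α β ε * N1 ε γ δ) = ∑ ε, N1 β γ ε * N1 α ε δ
  N1_dim : ∀ α β, dJ α * dJ β = ∑ γ, (N1 α β γ : ℝ) * dJ γ
  N2_comm : ∀ φ ψ χ, N2 φ ψ χ = N2 ψ φ χ
  N2_one : ∀ φ ψ, N2 oneK φ ψ = if φ = ψ then 1 else 0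
  N2_dual : ∀ φ ψ, N2 φ ψ oneK = if ψ = dual2 φ then 1 else 0
  N2_dim : ∀ φ ψ, dK φ * dK ψ = ∑ χ, (N2 φ ψ χ : ℝ) * dK χ
  NC_comm : ∀ i j k, NC i j k = NC j i k
  NC_one : ∀ i j, NC oneI i j = if i = j then 1 else 0
  NC_dual : ∀ i j, NC i j oneI = if j = dualI i then 1 else 0
  NC_dim : ∀ i j, dI i * dI j = ∑ k, (NC i j k : ℝ) * dI k
  NV_one : ∀ v w, NV (ι oneI) v w = if v = w then 1 else 0
  NV_local : ∀ i j k, NV (ι i) (ι j) (ι k) = NC i j k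
  NV_local_only : ∀ i j v, (∀ k, ι k ≠ v) → NV (ι i) (ι j) v = 0
  res_one : ∀ φ, res (ι oneI) oneJ φ = if φ = oneK then 1 else 0
  res_unit : ∀ α, res (ι oneI) α oneK = if α = oneJ then 1 else 0
  free_hom : ∀ α β φ ψ v,
      (∑ w, ∑ u, res w α φ * res u β ψ * NV w u v)
        = ∑ γ, ∑ χ, N1 α β γ * N2 φ ψ χ * res v γ χ
  s_res : ∀ i α φ,
      (∑ j, sC i j * (res (ι j) α φ : ℂ))
        = ∑ β, ∑ ψ, (res (ι i) β ψ : ℂ) * s1 β α * s2 ψ φ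
  s1_symm : ∀ α β, s1 α β = s1 β α
  s1_unitary : ∀ α β, (∑ γ, s1 α γ * (starRingEnd ℂ) (s1 β γ)) = if α = β then 1 else 0
  s1_one : ∀ α, s1 oneJ α = (dJ α : ℂ) * s1 oneJ oneJ
  s1_one_real : (s1 oneJ oneJ).im = 0
  s1_one_pos : 0 < (s1 oneJ oneJ).re
  s2_symm : ∀ φ ψ, s2 φ ψ = s2 ψ φ
  s2_unitary : ∀ φ ψ, (∑ χ, s2 φ χ * (starRingEnd ℂ) (s2 ψ χ)) = if φ = ψ then 1 else 0
  s2_one : ∀ φ, s2 oneK φ = (dK φ : ℂ) * s2 oneK oneK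
  s2_one_real : (s2 oneK oneK).im = 0
  s2_one_pos : 0 < (s2 oneK oneK).re
  sC_symm : ∀ i j, sC i j = sC j i
  sC_unitary : ∀ i j, (∑ k, sC i k * (starRingEnd ℂ) (sC j k)) = if i = j then 1 else 0
  sC_one : ∀ i, sC oneI i = (dI i : ℂ) * sC oneI oneI
  sC_one_real : (sC oneI oneI).im = 0
  sC_one_pos : 0 < (sC oneI oneI).re
  θ1_one : θ1 oneJ = 1
  θ2_one : θ2 oneK = 1
  θC_one : θC oneI = 1
  centralizes_iff : ∀ α β,
      centralizes α β ↔ s1 α β = ((dJ α * dJ β : ℝ) : ℂ) * s1 oneJ oneJ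

namespace CosetSetting

attribute [instance] fintI fintJ fintK fintV deqI deqJ deqK deqV

variable (S : CosetSetting)

/-- the multiplicity function of `M^{(i,α)}`, as an object of `C2` -/
def m (i : S.I) (α : S.J) : S.K → ℕ := S.res (S.ι i) α

/-- `J_i = {α ∈ J : M^{(i,α)} ≠ 0}` -/
def Ji (i : S.I) : Set S.J := {α | ∃ φ, S.m i α φ ≠ 0}

/-- `J_1` -/
def J1 : Set S.J := S.Ji S.oneI

/-- `a_{α⊗1} = A ⊠ (W^α ⊗ 1_{C2})` as an object (multiplicity function) of `(C1 ⊗ C2)_A`;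
its multiplicities are given by Frobenius reciprocity. -/
def aL (α : S.J) : S.V → ℕ := fun v => S.res v α S.oneK

/-- `a_{1⊗N^φ} = A ⊠ (1_{C1} ⊗ N^φ)` -/
def aRs (φ : S.K) : S.V → ℕ := fun v => S.res v S.oneJ φ

/-- `a_{1⊗X} = A ⊠ (1_{C1} ⊗ X)` for an object `X` of `C2` -/
def aR (X : S.K → ℕ) : S.V → ℕ := fun v => ∑ φ, X φ * S.res v S.oneJ φ

/-- `M^i` viewed as a (simple) object of `(C1 ⊗ C2)_A` -/
def Mobj (i : S.I) : S.V → ℕ := fun v => if v = S.ι i then 1 else 0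

/-- tensor product `⊠_A` of objects of `(C1 ⊗ C2)_A` -/
def tA (X Y : S.V → ℕ) : S.V → ℕ := fun v => ∑ w, ∑ u, X w * Y u * S.NV w u v

/-- `⟨X,Y⟩ = dim Hom` in `(C1 ⊗ C2)_A` -/
def homA (X Y : S.V → ℕ) : ℕ := ∑ v, X v * Y v

/-- tensor product of objects of `C2` -/
def t2 (X Y : S.K → ℕ) : S.K → ℕ := fun χ => ∑ φ, ∑ ψ, X φ * Y ψ * S.N2 φ ψ χ

/-- `⟨X,Y⟩ = dim Hom` in `C2` -/
def hom2 (X Y : S.K → ℕ) : ℕ := ∑ φ, X φ * Y φ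

/-- categorical dimension of an object of `C2` -/
def dim2 (X : S.K → ℕ) : ℝ := ∑ φ, (X φ : ℝ) * S.dK φ

/-- the Kac–Wakimoto set: those `α ∈ J` for which the `A`-module `a_{α⊗1}` is local,
i.e. all of its simple summands are local (hence of the form `M^i`). -/
def KW : Set S.J := {α | ∀ v, S.aL α v ≠ 0 → ∃ i, S.ι i = v}

/-- `X` is a direct summand of `Y` in `(C1 ⊗ C2)_A` -/
def summand (X Y : S.V → ℕ) : Prop := ∀ v, X v ≤ Y v

end CosetSetting

namespace CosetSetting

variable (S : CosetSetting)

lemma dual1_invol (a : S.J) : S.dual1 (S.dual1 a) = a := by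
  have h2 := S.N1_dual (S.dual1 a) a
  rw [S.N1_comm, S.N1_dual, if_pos rfl] at h2
  by_contra hne
  rw [if_neg (fun hh : a = S.dual1 (S.dual1 a) => hne hh.symm)] at h2
  exact one_ne_zero h2

lemma F1 (x y z : S.J) : S.N1 x y (S.dual1 z) = S.N1 y z (S.dual1 x) := by
  have h := S.N1_assoc x y z S.oneJ
  have ec : ∀ ε : S.J, (z = S.dual1 ε) = (ε = S.dual1 z) := by
    intro ε
    refine propext ⟨fun hc => ?_, fun hc => ?_⟩
    · rw [hc, S.dual1_invol]
    · rw [hc, S.dual1_invol]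
  simp only [S.N1_dual, ec, mul_ite, mul_one, mul_zero, Finset.sum_ite_eq',
    Finset.mem_univ, if_true] at h
  exact h

lemma F2 (a b c : S.J) : S.N1 a b c = S.N1 a (S.dual1 c) (S.dual1 b) := by
  have h := S.F1 b a (S.dual1 c)
  rw [S.dual1_invol] at h
  rw [S.N1_comm] at h
  exact h

lemma stat (a c : S.J) :
    (∑ b, (S.N1 a b c : ℝ) * S.dJ (S.dual1 b)) = S.dJ a * S.dJ (S.dual1 c) := by
  have hinv : Function.Involutive S.dual1 := fun x => S.dual1_invol x
  have h1 : (∑ b, (S.N1 a b c : ℝ) * S.dJ (S.dual1 b))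
      = ∑ b, (S.N1 a (S.dual1 c) (S.dual1 b) : ℝ) * S.dJ (S.dual1 b) := by
    refine Finset.sum_congr rfl fun b _ => ?_
    rw [← S.F2]
  have h2 : (∑ b, (S.N1 a (S.dual1 c) (S.dual1 b) : ℝ) * S.dJ (S.dual1 b))
      = ∑ d, (S.N1 a (S.dual1 c) d : ℝ) * S.dJ d :=
    Equiv.sum_comp hinv.toPerm (fun d => (S.N1 a (S.dual1 c) d : ℝ) * S.dJ d)
  rw [h1, h2, ← S.N1_dim]

lemma reach_rev (a : S.J) {b c : S.J} (h : S.N1 a b c ≠ 0) :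
    Relation.ReflTransGen (fun x y => S.N1 a x y ≠ 0) c b := by
  classical
  by_contra hb
  set E : S.J → S.J → Prop := fun x y => S.N1 a x y ≠ 0 with hE
  set T : Finset S.J := Finset.univ.filter (fun d => Relation.ReflTransGen E c d)
    with hT
  have hcT : c ∈ T := by
    simp only [hT, Finset.mem_filter, Finset.mem_univ, true_and]
    exact Relation.ReflTransGen.refl
  have hbT : b ∉ T := by
    simp only [hT, Finset.mem_filter, Finset.mem_univ, true_and]
    exact hb
  have hclosed : ∀ x ∈ T, ∀ y : S.J, S.N1 a x y ≠ 0 → y ∈ T := by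
    intro x hx y hxy
    simp only [hT, Finset.mem_filter, Finset.mem_univ, true_and] at hx ⊢
    exact hx.tail hxy
  set Q : S.J → S.J → ℝ := fun x y => (S.N1 a x y : ℝ) * S.dJ y * S.dJ (S.dual1 x)
    with hQ
  have hQnn : ∀ x y, 0 ≤ Q x y := by
    intro x y
    have := (S.dJ_pos y).le
    have := (S.dJ_pos (S.dual1 x)).le
    positivity
  have hQzero : ∀ x y, Q x y = 0 → S.N1 a x y = 0 := by
    intro x y hxy
    rcases mul_eq_zero.1 hxy with h' | h'
    · rcases mul_eq_zero.1 h' with h'' | h''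
      · exact_mod_cast h''
      · exact absurd h'' (S.dJ_pos y).ne'
    · exact absurd h' (S.dJ_pos (S.dual1 x)).ne'
  have row : ∀ x, (∑ y, Q x y) = S.dJ a * S.dJ x * S.dJ (S.dual1 x) := by
    intro x
    have h0 : (∑ y, Q x y) = (∑ y, (S.N1 a x y : ℝ) * S.dJ y) * S.dJ (S.dual1 x) := by
      rw [Finset.sum_mul]
    rw [h0, ← S.N1_dim]
  have col : ∀ y, (∑ x, Q x y) = S.dJ a * S.dJ y * S.dJ (S.dual1 y) := by
    intro y
    have h0 : (∑ x, Q x y) = (∑ x, (S.N1 a x y : ℝ) * S.dJ (S.dual1 x)) * S.dJ y := by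
      rw [Finset.sum_mul]
      refine Finset.sum_congr rfl fun x _ => ?_
      ring
    rw [h0, S.stat]
    ring
  -- totals over T
  have hvanish : ∀ x ∈ T, (∑ y ∈ T, Q x y) = ∑ y, Q x y := by
    intro x hx
    refine Finset.sum_subset (Finset.subset_univ _) ?_
    intro y _ hy
    by_contra hne
    exact hy (hclosed x hx y (fun h0 => hne (by rw [hQ]; simp [h0])))
  have split : ∀ y, (∑ x ∈ T, Q x y) + (∑ x ∈ Tᶜ, Q x y) = ∑ x, Q x y := by
    intro y
    exact Finset.sum_add_sum_compl T (fun x => Q x y)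
  have hA : (∑ y ∈ T, ∑ x ∈ T, Q x y) = ∑ y ∈ T, ∑ x, Q x y := by
    rw [Finset.sum_comm]
    have : (∑ x ∈ T, ∑ y ∈ T, Q x y) = ∑ x ∈ T, ∑ y, Q x y :=
      Finset.sum_congr rfl fun x hx => hvanish x hx
    rw [this]
    calc (∑ x ∈ T, ∑ y, Q x y) = ∑ x ∈ T, S.dJ a * S.dJ x * S.dJ (S.dual1 x) :=
          Finset.sum_congr rfl fun x _ => row x
      _ = ∑ y ∈ T, ∑ x, Q x y := by
          refine Finset.sum_congr rfl fun y hy => ?_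
          rw [col]
  have hX : (∑ y ∈ T, ∑ x ∈ Tᶜ, Q x y) = 0 := by
    have := hA
    have h1 : (∑ y ∈ T, ((∑ x ∈ T, Q x y) + ∑ x ∈ Tᶜ, Q x y))
        = ∑ y ∈ T, ∑ x, Q x y :=
      Finset.sum_congr rfl fun y _ => split y
    rw [Finset.sum_add_distrib] at h1
    rw [hA] at h1
    linarith
  have hterm : Q b c = 0 := by
    have h1 : ∀ y ∈ T, (0:ℝ) ≤ ∑ x ∈ Tᶜ, Q x y := fun y _ =>
      Finset.sum_nonneg fun x _ => hQnn x y
    have h2 := (Finset.sum_eq_zero_iff_of_nonneg h1).1 hX c hcT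
    have h3 : ∀ x ∈ Tᶜ, (0:ℝ) ≤ Q x c := fun x _ => hQnn x c
    exact (Finset.sum_eq_zero_iff_of_nonneg h3).1 h2 b (Finset.mem_compl.2 hbT)
  exact h (hQzero b c hterm)

lemma reach_dual (a : S.J) :
    Relation.ReflTransGen (fun x y => S.N1 a x y ≠ 0) a (S.dual1 a) := by
  have h1 : S.N1 a S.oneJ a ≠ 0 := by
    rw [S.N1_comm, S.N1_one, if_pos rfl]
    exact one_ne_zero
  have h2 : S.N1 a (S.dual1 a) S.oneJ ≠ 0 := by
    rw [S.N1_dual, if_pos rfl]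
    exact one_ne_zero
  exact (S.reach_rev a h1).trans (S.reach_rev a h2)

lemma kw_step {a b g : S.J} (ha : a ∈ S.KW) (hb : b ∈ S.KW)
    (h : S.N1 a b g ≠ 0) : g ∈ S.KW := by
  intro v hv
  by_contra hni
  push_neg at hni
  have hfh := S.free_hom a b S.oneK S.oneK v
  have hL : (∑ w, ∑ u, S.res w a S.oneK * S.res u b S.oneK * S.NV w u v) = 0 := by
    refine Finset.sum_eq_zero fun w _ => Finset.sum_eq_zero fun u _ => ?_
    by_cases hw : S.res w a S.oneK = 0
    · rw [hw]; ring
    · by_cases hu : S.res u b S.oneK = 0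
      · rw [hu]; ring
      · obtain ⟨i, rfl⟩ := ha w hw
        obtain ⟨j, rfl⟩ := hb u hu
        rw [S.NV_local_only i j v hni, mul_zero]
  rw [hL] at hfh
  simp only [S.N2_one, mul_ite, mul_one, mul_zero, ite_mul, zero_mul,
    Finset.sum_ite_eq, Finset.mem_univ, if_true] at hfh
  have h0 : ∀ γ ∈ (Finset.univ : Finset S.J), S.N1 a b γ * S.res v γ S.oneK = 0 :=
    Finset.sum_eq_zero_iff.1 hfh.symm
  have h1 := h0 g (Finset.mem_univ g)
  rcases Nat.mul_eq_zero.1 h1 with h2 | h2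
  · exact h h2
  · exact hv h2

lemma kw_reach {a d : S.J} (ha : a ∈ S.KW)
    (h : Relation.ReflTransGen (fun x y => S.N1 a x y ≠ 0) a d) : d ∈ S.KW := by
  induction h with
  | refl => exact ha
  | tail _ hstep ih => exact S.kw_step ha ih hstep

lemma kw_dual {a : S.J} (ha : a ∈ S.KW) : S.dual1 a ∈ S.KW :=
  S.kw_reach ha (S.reach_dual a)

lemma sum_local (f : S.V → ℕ) (hf : ∀ v, f v ≠ 0 → ∃ i, S.ι i = v) :
    (∑ v, f v) = ∑ i, f (S.ι i) := by
  classical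
  have h1 : (∑ v, f v) = ∑ v ∈ Finset.univ.image S.ι, f v := by
    refine (Finset.sum_subset (Finset.subset_univ _) ?_).symm
    intro v _ hv
    by_contra h0
    obtain ⟨i, hi⟩ := hf v h0
    exact hv (Finset.mem_image.2 ⟨i, Finset.mem_univ i, hi⟩)
  rw [h1, Finset.sum_image (fun i _ j _ h => S.ι_inj h)]

lemma pair {x y : S.J} (hx : x ∈ S.KW) (hy : y ∈ S.KW) :
    (∑ i, S.res (S.ι i) x S.oneK * S.res (S.ι (S.dualI i)) y S.oneK)
      = if y = S.dual1 x then 1 else 0 := by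
  classical
  have hfh := S.free_hom x y S.oneK S.oneK (S.ι S.oneI)
  -- right hand side
  have hR : (∑ γ, ∑ χ, S.N1 x y γ * S.N2 S.oneK S.oneK χ * S.res (S.ι S.oneI) γ χ)
      = if y = S.dual1 x then 1 else 0 := by
    simp only [S.N2_one, mul_ite, mul_one, mul_zero, ite_mul, zero_mul,
      Finset.sum_ite_eq, Finset.mem_univ, if_true]
    simp only [S.res_unit, mul_ite, mul_one, mul_zero, Finset.sum_ite_eq',
      Finset.mem_univ, if_true]
    exact S.N1_dual x y
  -- left hand side
  have hL : (∑ w, ∑ u, S.res w x S.oneK * S.res u y S.oneK * S.NV w u (S.ι S.oneI))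
      = ∑ i, S.res (S.ι i) x S.oneK * S.res (S.ι (S.dualI i)) y S.oneK := by
    have hinner : ∀ w, (∑ u, S.res w x S.oneK * S.res u y S.oneK * S.NV w u (S.ι S.oneI))
        = ∑ j, S.res w x S.oneK * S.res (S.ι j) y S.oneK * S.NV w (S.ι j) (S.ι S.oneI) := by
      intro w
      refine S.sum_local _ fun u hu => ?_
      refine hy u fun h0 => hu ?_
      have h0' : S.res u y S.oneK = 0 := h0
      rw [h0']; ring
    rw [Finset.sum_congr rfl fun w _ => hinner w]
    have houter : (∑ w, ∑ j, S.res w x S.oneK * S.res (S.ι j) y S.oneK * S.NV w (S.ι j) (S.ι S.oneI))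
        = ∑ i, ∑ j, S.res (S.ι i) x S.oneK * S.res (S.ι j) y S.oneK
            * S.NV (S.ι i) (S.ι j) (S.ι S.oneI) := by
      refine S.sum_local _ fun w hw => ?_
      refine hx w fun h0 => hw ?_
      have h0' : S.res w x S.oneK = 0 := h0
      refine Finset.sum_eq_zero fun j _ => ?_
      rw [h0']; ring
    rw [houter]
    refine Finset.sum_congr rfl fun i _ => ?_
    have : ∀ j, S.NV (S.ι i) (S.ι j) (S.ι S.oneI) = if j = S.dualI i then 1 else 0 := by
      intro j
      rw [S.NV_local, S.NC_dual]
    simp only [this, mul_ite, mul_one, mul_zero, Finset.sum_ite_eq', Finset.mem_univ,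
      if_true]
  rw [hL, hR] at hfh
  exact hfh

end CosetSetting

/-- Lemma 4.4: for `α` in the Kac–Wakimoto set:
(1) the dual index `α'` is again in `KW`;
(2) if `M^i = a_{α⊗1}` then `⟨1_{C2}, (i,α)⟩ = 1`;
(3) if `β ∈ KW` and `a_{α⊗1} ≅ a_{β⊗1}` then `α = β`. -/
theorem statement_4 (S : CosetSetting) :
    ∀ α ∈ S.KW,
      (S.dual1 α ∈ S.KW) ∧
      (∀ i : S.I, S.aL α = S.Mobj i → S.m i α S.oneK = 1) ∧
      (∀ β ∈ S.KW, S.aL α = S.aL β → α = β) := by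
  intro α hα
  have hdual : S.dual1 α ∈ S.KW := S.kw_dual hα
  refine ⟨hdual, ?_, ?_⟩
  · intro i h
    have h0 := congrFun h (S.ι i)
    simpa [CosetSetting.aL, CosetSetting.Mobj, CosetSetting.m] using h0
  · intro β hβ heq
    have h1 := S.pair hα hdual
    have h2 := S.pair hβ hdual
    rw [if_pos rfl] at h1
    have hsum : (∑ i, S.res (S.ι i) α S.oneK * S.res (S.ι (S.dualI i)) (S.dual1 α) S.oneK)
        = ∑ i, S.res (S.ι i) β S.oneK * S.res (S.ι (S.dualI i)) (S.dual1 α) S.oneK := by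
      refine Finset.sum_congr rfl fun i _ => ?_
      have := congrFun heq (S.ι i)
      simp only [CosetSetting.aL] at this
      rw [this]
    rw [hsum, h2] at h1
    by_cases hc : S.dual1 α = S.dual1 β
    · have := congrArg S.dual1 hc
      rwa [S.dual1_invol, S.dual1_invol] at this
    · rw [if_neg hc] at h1
      exact absurd h1.symm one_ne_zero
end

section
/- For every i ∈ I and α ∈ J_i one has, in the fusion algebra K(C2), S̈(i,α) = Σ_{j∈I} Σ_{β∈J_j} conj(ṡ_{αβ}) · s_{ij} · (j,β). Moreover, every simple object of C2 appears as a direct summand of (i,α) for some i ∈ I and α ∈ J_i. -/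
open scoped BigOperators Classical

/-- Lemma 5.2: for `i ∈ I` and `α ∈ J_i`, in the fusion algebra
`K(C2)` (with complex coefficients, an object of `C2` being identified with its
multiplicity function `K → ℂ`), the action of the normalized S-matrix `s̈` of `C2`
satisfies `S̈(i,α) = Σ_{j∈I} Σ_{β∈J_j} conj(ṡ_{αβ}) s_{ij} (j,β)` (the sum over all
`β ∈ J` agrees with the sum over `β ∈ J_j` since `(j,β) = 0` otherwise).  Moreover every
simple object of `C2` appears in some `(i,α)`. -/
theorem statement_9 (S : CosetSetting) :
    (∀ i : S.I, ∀ α ∈ S.Ji i, ∀ ψ : S.K,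
      (∑ φ, (S.m i α φ : ℂ) * S.s2 φ ψ)
        = ∑ j, ∑ β, (starRingEnd ℂ) (S.s1 α β) * S.sC i j * (S.m j β ψ : ℂ)) ∧
    (∀ φ : S.K, ∃ i : S.I, ∃ α ∈ S.Ji i, S.m i α φ ≠ 0) := by
  classical
  have main : ∀ (i : S.I) (α : S.J) (ψ : S.K),
      (∑ φ, (S.m i α φ : ℂ) * S.s2 φ ψ)
        = ∑ j, ∑ β, (starRingEnd ℂ) (S.s1 α β) * S.sC i j * (S.m j β ψ : ℂ) := by
    intro i α ψ
    have h1 : ∀ β : S.J, (∑ j, S.sC i j * (S.m j β ψ : ℂ))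
        = ∑ γ, ∑ χ, (S.m i γ χ : ℂ) * S.s1 γ β * S.s2 χ ψ := fun β => S.s_res i β ψ
    have h2 : ∀ γ : S.J, (∑ β, (starRingEnd ℂ) (S.s1 α β) * S.s1 γ β)
        = if γ = α then 1 else 0 := by
      intro γ
      rw [show (∑ β, (starRingEnd ℂ) (S.s1 α β) * S.s1 γ β)
          = ∑ β, S.s1 γ β * (starRingEnd ℂ) (S.s1 α β) from
        Finset.sum_congr rfl fun β _ => mul_comm _ _]
      exact S.s1_unitary γ α
    calc ∑ φ, (S.m i α φ : ℂ) * S.s2 φ ψ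
        = ∑ γ, ∑ χ, (S.m i γ χ : ℂ) * S.s2 χ ψ * (if γ = α then 1 else 0) := by
          simp
      _ = ∑ γ, ∑ χ, (S.m i γ χ : ℂ) * S.s2 χ ψ
            * (∑ β, (starRingEnd ℂ) (S.s1 α β) * S.s1 γ β) := by
          simp_rw [h2]
      _ = ∑ β, (starRingEnd ℂ) (S.s1 α β)
            * (∑ γ, ∑ χ, (S.m i γ χ : ℂ) * S.s1 γ β * S.s2 χ ψ) := by
          have e1 : (∑ γ, ∑ χ, (S.m i γ χ : ℂ) * S.s2 χ ψ
                * (∑ β, (starRingEnd ℂ) (S.s1 α β) * S.s1 γ β))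
              = ∑ γ, ∑ β, ∑ χ, (starRingEnd ℂ) (S.s1 α β)
                * ((S.m i γ χ : ℂ) * S.s1 γ β * S.s2 χ ψ) := by
            refine Finset.sum_congr rfl fun γ _ => ?_
            simp_rw [Finset.mul_sum]
            rw [Finset.sum_comm]
            exact Finset.sum_congr rfl fun β _ =>
              Finset.sum_congr rfl fun χ _ => by ring
          have e2 : (∑ β, (starRingEnd ℂ) (S.s1 α β)
                * (∑ γ, ∑ χ, (S.m i γ χ : ℂ) * S.s1 γ β * S.s2 χ ψ))
              = ∑ β, ∑ γ, ∑ χ, (starRingEnd ℂ) (S.s1 α β)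
                * ((S.m i γ χ : ℂ) * S.s1 γ β * S.s2 χ ψ) := by
            simp_rw [Finset.mul_sum]
          rw [e1, e2]
          exact Finset.sum_comm
      _ = ∑ β, (starRingEnd ℂ) (S.s1 α β) * ∑ j, S.sC i j * (S.m j β ψ : ℂ) := by
          simp_rw [h1]
      _ = ∑ j, ∑ β, (starRingEnd ℂ) (S.s1 α β) * S.sC i j * (S.m j β ψ : ℂ) := by
          rw [Finset.sum_comm]
          simp_rw [Finset.mul_sum, mul_assoc]
  refine ⟨fun i α _ ψ => main i α ψ, ?_⟩
  intro φ
  by_contra h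
  push_neg at h
  have hzero : ∀ (j : S.I) (β : S.J), S.m j β φ = 0 := by
    intro j β
    by_contra hm
    exact hm (h j β ⟨φ, hm⟩)
  have hmain := main S.oneI S.oneJ φ
  have hL : (∑ χ, (S.m S.oneI S.oneJ χ : ℂ) * S.s2 χ φ) = S.s2 S.oneK φ := by
    have : ∀ χ : S.K, S.m S.oneI S.oneJ χ = if χ = S.oneK then 1 else 0 := S.res_one
    simp [this]
  rw [hL] at hmain
  simp only [hzero, Nat.cast_zero, mul_zero, Finset.sum_const_zero] at hmain
  rw [S.s2_one φ] at hmain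
  have h1 : (S.dK φ : ℂ) ≠ 0 := by
    exact_mod_cast (S.dK_pos φ).ne'
  have h2 : S.s2 S.oneK S.oneK ≠ 0 := fun hc =>
    S.s2_one_pos.ne' (by rw [hc, Complex.zero_re])
  exact (mul_ne_zero h1 h2) hmain
end

section
/- The Kac–Wakimoto Hypothesis holds: for every i ∈ I, α ∈ J_i, and β ∈ KW, letting j ∈ I be determined by M^j = a_{β⊗1}, the number s_{ij} · conj(ṡ_{αβ}) is real and nonnegative. -/
open scoped BigOperators Classical

/-! If `a_{β⊗1} = M^j`, the restriction formula `s_res` at `(β, 1)` reads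
`s_{ij} = s̈₁₁ · Σ_γ T_{iγ} ṡ_{γβ}` (with `s̈₁₁ = s2Vac`) and `T_{iγ} = dim M^{(i,γ)} ≥ 0`.
Unitarity of `s` and `ṡ` turns this into `‖T x‖² = s̈₁₁⁻² ‖x‖²` for the column `x = ṡ_{·β}`,
while the vacuum rows and columns of the three S-matrices give `Tᵀ T d = s̈₁₁⁻² d` for the
positive vector `d = (dim W^γ)_γ`. The difference `s̈₁₁⁻² ‖x‖² - ‖T x‖²` is then a sum of the
nonnegative terms `T_{iγ} d_γ T_{iγ'} d_γ' |x_γ/d_γ - x_γ'/d_γ'|²`, so `x_γ / d_γ` is constant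
along each row of `T`. For `α ∈ J_i` this yields `s_{ij} = s̈₁₁ dim(M^i) ṡ_{αβ} / d_α`, and
`s_{ij} conj(ṡ_{αβ}) = s̈₁₁ dim(M^i) |ṡ_{αβ}|² / d_α ≥ 0`. -/

open Finset Complex ComplexConjugate

section Energy

variable {ι κ : Type*} [Fintype ι] [Fintype κ]

theorem normSq_sum_ofReal_mul (w : κ → ℝ) (y : κ → ℂ) :
    normSq (∑ γ, (w γ : ℂ) * y γ) = ∑ γ, ∑ γ', w γ * w γ' * (y γ * conj (y γ')).re := by
  have h := congrArg re (mul_conj (∑ γ, (w γ : ℂ) * y γ))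
  rw [ofReal_re, map_sum, sum_mul_sum] at h
  simp only [← h, re_sum, map_mul, conj_ofReal]
  refine sum_congr rfl fun γ _ => sum_congr rfl fun γ' _ => ?_
  rw [show (w γ : ℂ) * y γ * ((w γ' : ℂ) * conj (y γ'))
    = ((w γ * w γ' : ℝ) : ℂ) * (y γ * conj (y γ')) by push_cast; ring, re_ofReal_mul]

theorem sum_sum_mul_normSq_sub (w : κ → ℝ) (y : κ → ℂ) :
    ∑ γ, ∑ γ', w γ * w γ' * normSq (y γ - y γ') =
      2 * ((∑ γ, w γ) * ∑ γ, w γ * normSq (y γ) - normSq (∑ γ, (w γ : ℂ) * y γ)) := by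
  have hsq : ∑ γ, ∑ γ', w γ * w γ' * normSq (y γ') = (∑ γ, w γ) * ∑ γ, w γ * normSq (y γ) := by
    simp only [sum_mul_sum, mul_assoc]
  have hsq' : ∑ γ, ∑ γ', w γ * w γ' * normSq (y γ) = (∑ γ, w γ) * ∑ γ, w γ * normSq (y γ) := by
    rw [sum_comm, ← hsq]
    exact sum_congr rfl fun γ _ => sum_congr rfl fun γ' _ => by ring
  calc ∑ γ, ∑ γ', w γ * w γ' * normSq (y γ - y γ')
      = ∑ γ, ∑ γ', w γ * w γ' * normSq (y γ) + ∑ γ, ∑ γ', w γ * w γ' * normSq (y γ')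
          - 2 * ∑ γ, ∑ γ', w γ * w γ' * (y γ * conj (y γ')).re := by
        simp only [← sum_add_distrib, ← sum_sub_distrib, mul_sum, normSq_sub]
        exact sum_congr rfl fun γ _ => sum_congr rfl fun γ' _ => by ring
    _ = _ := by rw [hsq, hsq', normSq_sum_ofReal_mul]; ring

variable (T : ι → κ → ℝ) (d : κ → ℝ) (c : ℝ) (x : κ → ℂ)

theorem sum_sum_sum_mul_normSq_div_sub
    (hd : ∀ γ, d γ ≠ 0) (heig : ∀ γ, ∑ i, T i γ * ∑ γ', T i γ' * d γ' = c * d γ) :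
    ∑ i, ∑ γ, ∑ γ', T i γ * d γ * (T i γ' * d γ') * normSq (x γ / d γ - x γ' / d γ') =
      2 * (c * ∑ γ, normSq (x γ) - ∑ i, normSq (∑ γ, (T i γ : ℂ) * x γ)) := by
  have hx : ∀ i γ, ((T i γ * d γ : ℝ) : ℂ) * (x γ / d γ) = T i γ * x γ := fun i γ => by
    push_cast; field_simp [ofReal_ne_zero.2 (hd γ)]
  have hdiag : ∑ i, (∑ γ', T i γ' * d γ') * ∑ γ, T i γ * d γ * normSq (x γ / d γ) =
      c * ∑ γ, normSq (x γ) := by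
    calc ∑ i, (∑ γ', T i γ' * d γ') * ∑ γ, T i γ * d γ * normSq (x γ / d γ)
        = ∑ i, ∑ γ, T i γ * (∑ γ', T i γ' * d γ') * (d γ * normSq (x γ / d γ)) := by
          refine sum_congr rfl fun i _ => ?_
          rw [mul_sum]
          exact sum_congr rfl fun γ _ => by ring
      _ = ∑ γ, (∑ i, T i γ * ∑ γ', T i γ' * d γ') * (d γ * normSq (x γ / d γ)) := by
          rw [sum_comm]
          simp only [sum_mul]
      _ = c * ∑ γ, normSq (x γ) := by
          rw [mul_sum]
          refine sum_congr rfl fun γ _ => ?_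
          rw [heig, normSq_div, normSq_ofReal]
          field_simp [hd γ]
  simp only [sum_sum_mul_normSq_sub, ← mul_sum, sum_sub_distrib, hx, hdiag]

variable {T d c x}

theorem div_eq_div_of_sum_normSq_eq (hT : ∀ i γ, 0 ≤ T i γ) (hd : ∀ γ, 0 < d γ)
    (heig : ∀ γ, ∑ i, T i γ * ∑ γ', T i γ' * d γ' = c * d γ)
    (hx : ∑ i, normSq (∑ γ, (T i γ : ℂ) * x γ) = c * ∑ γ, normSq (x γ))
    {i : ι} {γ γ' : κ} (hγ : 0 < T i γ) (hγ' : 0 < T i γ') : x γ / d γ = x γ' / d γ' := by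
  have hterm : ∀ i γ γ', 0 ≤ T i γ * d γ * (T i γ' * d γ') * normSq (x γ / d γ - x γ' / d γ') :=
    fun i γ γ' => mul_nonneg (mul_nonneg (mul_nonneg (hT i γ) (hd γ).le)
      (mul_nonneg (hT i γ') (hd γ').le)) (normSq_nonneg _)
  have henergy := sum_sum_sum_mul_normSq_div_sub T d c x (fun γ => (hd γ).ne') heig
  rw [hx, sub_self, mul_zero, sum_eq_zero_iff_of_nonneg fun i _ =>
    sum_nonneg fun γ _ => sum_nonneg fun γ' _ => hterm i γ γ'] at henergy
  have hrow := henergy i (mem_univ _)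
  rw [sum_eq_zero_iff_of_nonneg fun γ _ => sum_nonneg fun γ' _ => hterm i γ γ'] at hrow
  have hentry := hrow γ (mem_univ _)
  rw [sum_eq_zero_iff_of_nonneg fun γ' _ => hterm i γ γ'] at hentry
  have hpos : 0 < T i γ * d γ * (T i γ' * d γ') :=
    mul_pos (mul_pos hγ (hd γ)) (mul_pos hγ' (hd γ'))
  exact sub_eq_zero.1 (normSq_eq_zero.1
    ((mul_eq_zero.1 (hentry γ' (mem_univ _))).resolve_left hpos.ne'))

theorem sum_mul_eq_of_sum_normSq_eq (hT : ∀ i γ, 0 ≤ T i γ) (hd : ∀ γ, 0 < d γ)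
    (heig : ∀ γ, ∑ i, T i γ * ∑ γ', T i γ' * d γ' = c * d γ)
    (hx : ∑ i, normSq (∑ γ, (T i γ : ℂ) * x γ) = c * ∑ γ, normSq (x γ))
    {i : ι} {α : κ} (hα : 0 < T i α) :
    ∑ γ, (T i γ : ℂ) * x γ = ((∑ γ, T i γ * d γ : ℝ) : ℂ) * (x α / d α) := by
  push_cast
  rw [sum_mul]
  refine sum_congr rfl fun γ _ => ?_
  rcases (hT i γ).eq_or_lt with hzero | hγ
  · simp [← hzero]
  · rw [← div_eq_div_of_sum_normSq_eq hT hd heig hx hγ hα]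
    field_simp [ofReal_ne_zero.2 (hd γ).ne']

end Energy

namespace CosetSetting

variable (S : CosetSetting)

def s1Vac : ℝ := (S.s1 S.oneJ S.oneJ).re

def s2Vac : ℝ := (S.s2 S.oneK S.oneK).re

def sCVac : ℝ := (S.sC S.oneI S.oneI).re

lemma s1Vac_pos : 0 < S.s1Vac := S.s1_one_pos

lemma s2Vac_pos : 0 < S.s2Vac := S.s2_one_pos

lemma sCVac_pos : 0 < S.sCVac := S.sC_one_pos

lemma s1_oneJ_apply (γ : S.J) : S.s1 S.oneJ γ = S.dJ γ * S.s1Vac := by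
  rw [S.s1_one, s1Vac, conj_eq_iff_re.1 (conj_eq_iff_im.2 S.s1_one_real)]

lemma s1_apply_oneJ (γ : S.J) : S.s1 γ S.oneJ = S.dJ γ * S.s1Vac := by
  rw [S.s1_symm, s1_oneJ_apply]

lemma s2_oneK_apply (ψ : S.K) : S.s2 S.oneK ψ = S.dK ψ * S.s2Vac := by
  rw [S.s2_one, s2Vac, conj_eq_iff_re.1 (conj_eq_iff_im.2 S.s2_one_real)]

lemma s2_apply_oneK (ψ : S.K) : S.s2 ψ S.oneK = S.dK ψ * S.s2Vac := by
  rw [S.s2_symm, s2_oneK_apply]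

lemma sC_oneI_apply (k : S.I) : S.sC S.oneI k = S.dI k * S.sCVac := by
  rw [S.sC_one, sCVac, conj_eq_iff_re.1 (conj_eq_iff_im.2 S.sC_one_real)]

lemma sC_apply_oneI (k : S.I) : S.sC k S.oneI = S.dI k * S.sCVac := by
  rw [S.sC_symm, sC_oneI_apply]

lemma sum_normSq_sC_apply (j : S.I) : ∑ i, normSq (S.sC i j) = 1 := by
  have h := S.sC_unitary j j
  rw [if_pos rfl] at h
  simp only [mul_conj, S.sC_symm j] at h
  exact_mod_cast h

lemma sum_normSq_s1_apply (β : S.J) : ∑ γ, normSq (S.s1 γ β) = 1 := by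
  have h := S.s1_unitary β β
  rw [if_pos rfl] at h
  simp only [mul_conj, S.s1_symm β] at h
  exact_mod_cast h

theorem sC_eq_of_aL_eq_Mobj {β : S.J} {j : S.I} (haL : S.aL β = S.Mobj j) (i : S.I) :
    S.sC i j = S.s2Vac * ∑ γ, (S.dim2 (S.m i γ) : ℂ) * S.s1 γ β := by
  have hcol : ∀ k, (S.res (S.ι k) β S.oneK : ℂ) = if k = j then 1 else 0 := fun k => by
    have h := congrFun haL (S.ι k)
    simp only [aL, Mobj, S.ι_inj.eq_iff] at h
    simp [h]
  have h := S.s_res i β S.oneK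
  simp only [hcol, mul_ite, mul_one, mul_zero, sum_ite_eq', mem_univ, if_true] at h
  rw [h, mul_sum]
  refine sum_congr rfl fun γ _ => ?_
  simp only [s2_apply_oneK, dim2, m]
  push_cast
  rw [sum_mul, mul_sum]
  exact sum_congr rfl fun ψ _ => by ring

lemma res_ι_oneI_oneJ_oneK : S.res (S.ι S.oneI) S.oneJ S.oneK = 1 := by
  simp [S.res_one]

/-- With `t = a_{1⊗1}`, Frobenius reciprocity `free_hom` gives `t ⊠_A t = t`; a summand
`M^i ≠ A` of `t` would occur in `t ⊠_A t` at least twice, once beside each copy of `A`. -/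
theorem res_ι_oneJ_oneK_eq_zero {i : S.I} (hi : i ≠ S.oneI) :
    S.res (S.ι i) S.oneJ S.oneK = 0 := by
  set t : S.V → ℕ := fun v => S.res v S.oneJ S.oneK
  have hA : t (S.ι S.oneI) = 1 := S.res_ι_oneI_oneJ_oneK
  have htt : ∑ w, ∑ u, t w * t u * S.NV w u (S.ι i) = t (S.ι i) := by
    simp [t, S.free_hom, S.N1_one, S.N2_one]
  set f : S.V → ℕ := fun w => ∑ u, t w * t u * S.NV w u (S.ι i)
  have hfA : t (S.ι i) ≤ f (S.ι S.oneI) := by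
    refine le_trans ?_ (single_le_sum (fun u _ => Nat.zero_le _) (mem_univ (S.ι i)))
    simp [hA, S.NV_one]
  have hfi : t (S.ι i) ≤ f (S.ι i) := by
    refine le_trans ?_ (single_le_sum (fun u _ => Nat.zero_le _) (mem_univ (S.ι S.oneI)))
    simp [hA, S.NV_local, S.NC_comm i, S.NC_one]
  have hsum := add_le_sum (f := f) (fun w _ => Nat.zero_le _) (mem_univ _) (mem_univ _)
    (S.ι_inj.ne hi.symm)
  rw [htt] at hsum
  have ht : t (S.ι i) = 0 := by omega
  exact ht

def resDim (i : S.I) : ℝ := ∑ γ, S.dim2 (S.m i γ) * S.dJ γ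

theorem s1Vac_mul_s2Vac_mul_resDim (i : S.I) :
    S.s1Vac * S.s2Vac * S.resDim i = S.dI i * S.sCVac := by
  have h := S.s_res i S.oneJ S.oneK
  rw [sum_eq_single S.oneI (fun k _ hk => by simp [S.res_ι_oneJ_oneK_eq_zero hk])
    (by simp)] at h
  simp only [res_ι_oneI_oneJ_oneK, Nat.cast_one, mul_one, sC_apply_oneI, s1_apply_oneJ,
    s2_apply_oneK] at h
  have hc : ((S.s1Vac * S.s2Vac * S.resDim i : ℝ) : ℂ) = ((S.dI i * S.sCVac : ℝ) : ℂ) := by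
    push_cast
    rw [h, resDim, ofReal_sum, mul_sum]
    refine sum_congr rfl fun γ _ => ?_
    simp only [dim2, m]
    push_cast
    rw [sum_mul, mul_sum]
    exact sum_congr rfl fun ψ _ => by ring
  exact_mod_cast hc

/-- Pair `s_res` at `i = 1` with the vacuum column `conj (s2 oneK ψ) = dK ψ * s2Vac` and use
unitarity of `s2`. -/
theorem s2Vac_mul_sCVac_mul_sum_dI_mul_dim2 (γ : S.J) :
    S.s2Vac * S.sCVac * ∑ k, S.dI k * S.dim2 (S.m k γ) = S.dJ γ * S.s1Vac := by
  have h : ∑ ψ, (∑ k, S.sC S.oneI k * S.res (S.ι k) γ ψ) * conj (S.s2 S.oneK ψ) =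
      ∑ ψ, (∑ γ', ∑ ψ', S.res (S.ι S.oneI) γ' ψ' * S.s1 γ' γ * S.s2 ψ' ψ) *
        conj (S.s2 S.oneK ψ) := by
    simp only [S.s_res]
  have hrhs : ∑ ψ, (∑ γ', ∑ ψ', S.res (S.ι S.oneI) γ' ψ' * S.s1 γ' γ * S.s2 ψ' ψ) *
      conj (S.s2 S.oneK ψ) = S.s1 S.oneJ γ := by
    calc _ = ∑ γ', ∑ ψ', S.res (S.ι S.oneI) γ' ψ' * S.s1 γ' γ *
          ∑ ψ, S.s2 ψ' ψ * conj (S.s2 S.oneK ψ) := by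
          simp only [sum_mul, mul_sum]
          rw [sum_comm]
          refine sum_congr rfl fun γ' _ => ?_
          rw [sum_comm]
          exact sum_congr rfl fun ψ' _ => sum_congr rfl fun ψ _ => by ring
      _ = S.s1 S.oneJ γ := by simp [S.s2_unitary, S.res_unit]
  have hc : ((S.s2Vac * S.sCVac * ∑ k, S.dI k * S.dim2 (S.m k γ) : ℝ) : ℂ) =
      ((S.dJ γ * S.s1Vac : ℝ) : ℂ) := by
    push_cast
    rw [← s1_oneJ_apply, ← hrhs, ← h, mul_sum]
    simp only [sum_mul]
    conv_rhs => rw [sum_comm]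
    refine sum_congr rfl fun k _ => ?_
    simp only [dim2, m, sC_oneI_apply, s2_oneK_apply, map_mul, conj_ofReal]
    push_cast
    simp only [mul_sum]
    exact sum_congr rfl fun ψ _ => by ring
  exact_mod_cast hc

/-- `dJ` is a positive eigenvector of `Tᵀ T` for `T i γ = dim M^{(i,γ)}`. -/
theorem sum_dim2_m_mul_resDim (γ : S.J) :
    ∑ i, S.dim2 (S.m i γ) * S.resDim i = (S.s2Vac ^ 2)⁻¹ * S.dJ γ := by
  have h1 := S.s1Vac_pos.ne'
  have h2 := S.s2Vac_pos.ne'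
  have hC := S.sCVac_pos.ne'
  have hres : ∀ i, S.resDim i = S.sCVac / (S.s1Vac * S.s2Vac) * S.dI i := fun i => by
    rw [div_mul_eq_mul_div, mul_comm, ← S.s1Vac_mul_s2Vac_mul_resDim i]
    field_simp
  have hsum : ∑ k, S.dI k * S.dim2 (S.m k γ) = S.dJ γ * S.s1Vac / (S.s2Vac * S.sCVac) := by
    rw [← S.s2Vac_mul_sCVac_mul_sum_dI_mul_dim2 γ]
    field_simp
  calc ∑ i, S.dim2 (S.m i γ) * S.resDim i
      = S.sCVac / (S.s1Vac * S.s2Vac) * ∑ k, S.dI k * S.dim2 (S.m k γ) := by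
        rw [mul_sum]
        exact sum_congr rfl fun i _ => by rw [hres]; ring
    _ = (S.s2Vac ^ 2)⁻¹ * S.dJ γ := by
        rw [hsum]
        field_simp

theorem sum_normSq_sum_dim2_m_mul_s1 {β : S.J} {j : S.I} (haL : S.aL β = S.Mobj j) :
    ∑ i, normSq (∑ γ, (S.dim2 (S.m i γ) : ℂ) * S.s1 γ β) =
      (S.s2Vac ^ 2)⁻¹ * ∑ γ, normSq (S.s1 γ β) := by
  have h2 := S.s2Vac_pos.ne'
  rw [S.sum_normSq_s1_apply, ← S.sum_normSq_sC_apply j, mul_sum]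
  refine sum_congr rfl fun i _ => ?_
  rw [S.sC_eq_of_aL_eq_Mobj haL i, normSq_mul, normSq_ofReal]
  field_simp

lemma dim2_nonneg (X : S.K → ℕ) : 0 ≤ S.dim2 X :=
  sum_nonneg fun φ _ => mul_nonneg (Nat.cast_nonneg _) (S.dK_pos φ).le

lemma dim2_m_pos_of_mem_Ji {i : S.I} {α : S.J} (hα : α ∈ S.Ji i) : 0 < S.dim2 (S.m i α) := by
  obtain ⟨φ, hφ⟩ := hα
  exact sum_pos' (fun ψ _ => mul_nonneg (Nat.cast_nonneg _) (S.dK_pos ψ).le)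
    ⟨φ, mem_univ _, mul_pos (Nat.cast_pos.2 (Nat.pos_of_ne_zero hφ)) (S.dK_pos φ)⟩

lemma resDim_nonneg (i : S.I) : 0 ≤ S.resDim i :=
  sum_nonneg fun γ _ => mul_nonneg (S.dim2_nonneg _) (S.dJ_pos γ).le

end CosetSetting

/-- Theorem 7.2, the Kac–Wakimoto Hypothesis: for every `i ∈ I`,
`α ∈ J_i` and `β ∈ KW`, letting `j ∈ I` be determined by `M^j = a_{β⊗1}`, the number
`s_{ij} · conj(ṡ_{αβ})` is real and nonnegative. -/
theorem statement_18 (S : CosetSetting) :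
    ∀ i : S.I, ∀ α ∈ S.Ji i, ∀ β ∈ S.KW, ∀ j : S.I, S.aL β = S.Mobj j →
      ∃ r : ℝ, 0 ≤ r ∧ S.sC i j * (starRingEnd ℂ) (S.s1 α β) = (r : ℂ) := by
  intro i α hα β _ j haL
  have hrow := sum_mul_eq_of_sum_normSq_eq (x := fun γ => S.s1 γ β)
    (fun i γ => S.dim2_nonneg (S.m i γ)) S.dJ_pos S.sum_dim2_m_mul_resDim
    (S.sum_normSq_sum_dim2_m_mul_s1 haL) (S.dim2_m_pos_of_mem_Ji hα)
  refine ⟨S.s2Vac * S.resDim i * (normSq (S.s1 α β) / S.dJ α),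
    mul_nonneg (mul_nonneg S.s2Vac_pos.le (S.resDim_nonneg i))
      (div_nonneg (normSq_nonneg _) (S.dJ_pos α).le), ?_⟩
  rw [S.sC_eq_of_aL_eq_Mobj haL i, hrow, CosetSetting.resDim]
  push_cast
  rw [← mul_conj]
  ring
end
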